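/- arXiv:math/0601339 — 4 statements merged into one kernel-verified Lean document; each statement's English description precedes it below -/
import Mathlib

section
/- The largest power of 2 dividing the n-th Catalan number C_n = (1/(n+1))·binom(2n,n) equals s(n+1) - 1, where s(m) denotes the sum of the binary digits of m. -/
/-!
Since `C n = (2n)! / (n! (n+1)!)`, Legendre's formula `v₂(m!) = m - s(m)` gives
`v₂(C n) = (2n - s(2n)) - (n - s(n)) - (n + 1 - s(n+1))`, and `s(2n) = s(n)` collapses this
to `s(n+1) - 1`.
-/

open Nat

theorem Nat.digits_sum_base_mul {b : ℕ} (hb : 1 < b) (m : ℕ) :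
    (b.digits (b * m)).sum = (b.digits m).sum := by
  rcases m.eq_zero_or_pos with rfl | hm
  · simp
  · simp [Nat.digits_base_mul hb hm]

theorem padicValNat_two_factorial (m : ℕ) : padicValNat 2 m ! = m - (Nat.digits 2 m).sum := by
  have : Fact (Nat.Prime 2) := ⟨Nat.prime_two⟩
  simpa using sub_one_mul_padicValNat_factorial (p := 2) m

theorem catalan_mul_factorial_mul_factorial_succ (n : ℕ) :
    catalan n * n ! * (n + 1)! = (2 * n)! := by
  have hchoose : n.centralBinom * n ! * n ! = (2 * n)! := by
    simpa [two_mul, Nat.centralBinom_eq_two_mul_choose] using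
      Nat.choose_mul_factorial_mul_factorial (show n ≤ 2 * n by omega)
  rw [← hchoose, ← succ_mul_catalan_eq_centralBinom, Nat.factorial_succ]
  ring

/-- The largest power of 2 dividing the Catalan number `C n` is `s(n+1) - 1`,
where `s m` is the binary digit sum of `m`. -/
theorem catalan_two_adic_val (n : ℕ) :
    padicValNat 2 (catalan n) = (Nat.digits 2 (n + 1)).sum - 1 := by
  have : Fact (Nat.Prime 2) := ⟨Nat.prime_two⟩
  have hprod := catalan_mul_factorial_mul_factorial_succ n
  have hcat : catalan n ≠ 0 := fun h => Nat.factorial_ne_zero (2 * n) (by simp [← hprod, h])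
  have hval : padicValNat 2 (catalan n) + padicValNat 2 n ! + padicValNat 2 (n + 1)! =
      padicValNat 2 (2 * n)! := by
    rw [← hprod, padicValNat.mul (mul_ne_zero hcat (factorial_ne_zero n)) (factorial_ne_zero _),
      padicValNat.mul hcat (factorial_ne_zero n)]
  rw [padicValNat_two_factorial, padicValNat_two_factorial, padicValNat_two_factorial,
    Nat.digits_sum_base_mul one_lt_two] at hval
  have hs_le := Nat.digit_sum_le 2 n
  have hs_succ_le := Nat.digit_sum_le 2 (n + 1)
  omega
end

section
/- The Catalan number C_n is odd if and only if n = 2^k - 1 for some k ≥ 0. -/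
/-!
Reduce Segner's recurrence `C (n + 1) = ∑_{i + j = n} C i * C j` modulo 2. The terms indexed by
`(i, j)` and `(j, i)` cancel, so only the diagonal term survives: `C (2m + 2)` is even and
`C (2m + 1) ≡ C m ^ 2 ≡ C m`. Hence `C n` is odd exactly when halving `n` through odd values
`n = 2m + 1` reaches `0`, i.e. when `n + 1` is a power of two.
-/
open Finset

section

variable {α R : Type*} [CommSemiring R] [CharP R 2]

theorem sum_mul_eq_zero_of_swap_mem_of_ne (f : α → R) {s : Finset (α × α)}
    (hswap : ∀ p ∈ s, p.swap ∈ s) (hne : ∀ p ∈ s, p.1 ≠ p.2) :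
    ∑ p ∈ s, f p.1 * f p.2 = 0 :=
  sum_involution (fun p _ ↦ p.swap)
    (fun p _ ↦ by rw [Prod.fst_swap, Prod.snd_swap, mul_comm (f p.2), CharTwo.add_self_eq_zero])
    (fun p hp _ h ↦ hne p hp (congrArg Prod.snd h)) hswap (fun p _ ↦ p.swap_swap)

theorem sum_antidiagonal_mul_eq_zero_of_odd (f : ℕ → R) {n : ℕ} (hn : Odd n) :
    ∑ p ∈ antidiagonal n, f p.1 * f p.2 = 0 := by
  obtain ⟨m, rfl⟩ := hn
  refine sum_mul_eq_zero_of_swap_mem_of_ne f (fun p hp ↦ ?_) (fun p hp ↦ ?_)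
  · simpa [add_comm] using hp
  · rw [HasAntidiagonal.mem_antidiagonal] at hp
    omega

theorem sum_antidiagonal_two_mul_mul_eq_sq (f : ℕ → R) (m : ℕ) :
    ∑ p ∈ antidiagonal (2 * m), f p.1 * f p.2 = f m ^ 2 := by
  have hmid : (m, m) ∈ antidiagonal (2 * m) := by simp [two_mul]
  have hrest : ∑ p ∈ (antidiagonal (2 * m)).erase (m, m), f p.1 * f p.2 = 0 := by
    refine sum_mul_eq_zero_of_swap_mem_of_ne f (fun p hp ↦ ?_) (fun p hp ↦ ?_) <;>
      rw [mem_erase, HasAntidiagonal.mem_antidiagonal] at hp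
    · rw [mem_erase, HasAntidiagonal.mem_antidiagonal, Ne, ← Prod.swap_inj, Prod.swap_swap]
      exact ⟨hp.1, by simpa [add_comm] using hp.2⟩
    · exact fun h ↦ hp.1 (Prod.ext (by omega) (by omega))
  rw [← add_sum_erase _ _ hmid, hrest, add_zero, sq]

end

theorem catalan_two_mul_add_two_even (m : ℕ) : Even (catalan (2 * m + 2)) := by
  rw [← ZMod.natCast_eq_zero_iff_even, catalan_succ']
  push_cast
  exact sum_antidiagonal_mul_eq_zero_of_odd (fun i ↦ (catalan i : ZMod 2)) (odd_two_mul_add_one m)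

theorem odd_catalan_two_mul_add_one_iff (m : ℕ) :
    Odd (catalan (2 * m + 1)) ↔ Odd (catalan m) := by
  have hcast : (catalan (2 * m + 1) : ZMod 2) = ((catalan m ^ 2 : ℕ) : ZMod 2) := by
    rw [catalan_succ']
    push_cast
    exact sum_antidiagonal_two_mul_mul_eq_sq (fun i ↦ (catalan i : ZMod 2)) m
  rw [← Nat.odd_pow_iff (n := catalan m) two_ne_zero, ← ZMod.natCast_eq_one_iff_odd,
    ← ZMod.natCast_eq_one_iff_odd, hcast]

theorem exists_two_mul_add_one_eq_two_pow_sub_one_iff (m : ℕ) :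
    (∃ k, 2 * m + 1 = 2 ^ k - 1) ↔ ∃ k, m = 2 ^ k - 1 := by
  constructor
  · rintro ⟨_ | k, hk⟩
    · simp at hk
    · exact ⟨k, by rw [pow_succ] at hk; omega⟩
  · rintro ⟨k, hk⟩
    exact ⟨k + 1, by have := k.one_le_two_pow; rw [pow_succ]; omega⟩

theorem two_mul_add_two_ne_two_pow_sub_one (m k : ℕ) : 2 * m + 2 ≠ 2 ^ k - 1 := by
  rcases k with _ | k
  · simp
  · have := k.one_le_two_pow
    rw [pow_succ]
    omega

/-- The Catalan number `C n` is odd iff `n = 2^k - 1` for some `k`. -/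
theorem catalan_odd_iff (n : ℕ) :
    Odd (catalan n) ↔ ∃ k : ℕ, n = 2 ^ k - 1 := by
  induction n using Nat.strong_induction_on with
  | _ n ih =>
    obtain ⟨m, rfl | rfl⟩ := n.even_or_odd'
    · rcases m with _ | m
      · simpa using ⟨0, rfl⟩
      · simpa [mul_add_one, ← Nat.not_even_iff_odd, catalan_two_mul_add_two_even]
          using two_mul_add_two_ne_two_pow_sub_one m
    · rw [odd_catalan_two_mul_add_one_iff, ih m (by omega),
        exists_two_mul_add_one_eq_two_pow_sub_one_iff]
end

section
/- Let F be the set of functions f : ℕ → ℤ such that f(x) is odd for all x and 2^{n+1} divides (Δⁿf)(x) for all n ≥ 1 and all x. If f, g ∈ F then the pointwise product f·g ∈ F. -/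
/-!
By the Leibniz rule for finite differences,
`Δⁿ(fg)(x) = ∑_{i+j=n} C(n,i) Δⁱf(x) Δʲg(x+i)`. For `n ≥ 1` the terms with `i = 0` or `j = 0`
are divisible by `2^(n+1)` through `g` resp. `f` alone, and every other term by
`2^(i+1) 2^(j+1) = 2^(n+2)`.
-/

/-- The forward difference operator. -/
def Δ (f : ℕ → ℤ) : ℕ → ℤ := fun x => f (x + 1) - f x

open Finset fwdDiff

section Leibniz

variable {M R : Type*} [AddCommMonoid M] [CommRing R] (h : M)

lemma fwdDiff_mul (f g : M → R) :
    Δ_[h] (f * g) = Δ_[h] f * (fun y ↦ g (y + h)) + f * Δ_[h] g := by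
  ext y
  simp only [fwdDiff, Pi.mul_apply, Pi.add_apply]
  ring

theorem fwdDiff_iter_mul (f g : M → R) (n : ℕ) (y : M) :
    Δ_[h] ^[n] (f * g) y = ∑ ij ∈ antidiagonal n,
      (n.choose ij.1 : R) * (Δ_[h] ^[ij.1] f y * Δ_[h] ^[ij.2] g (y + ij.1 • h)) := by
  induction n generalizing f g with
  | zero => simp
  | succ n ih =>
    rw [Function.iterate_succ_apply, fwdDiff_mul, fwdDiff_iter_add, Pi.add_apply, ih, ih,
      sum_antidiagonal_choose_succ_mul
        (fun i j ↦ Δ_[h] ^[i] f y * Δ_[h] ^[j] g (y + i • h)), add_comm]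
    congr 1
    refine sum_congr rfl fun ij hij ↦ ?_
    rw [Nat.choose_symm_of_eq_add (mem_antidiagonal.1 hij).symm, ← Function.iterate_succ_apply,
      fwdDiff_iter_comp_add, succ_nsmul, add_assoc]

end Leibniz

section Divisibility

variable {M R : Type*} [AddCommMonoid M] [CommRing R] {h : M} {a : R}

lemma pow_succ_dvd_mul_of_add_eq {n i j : ℕ} (hn : 1 ≤ n) (hij : i + j = n) {u v : R}
    (hu : 1 ≤ i → a ^ (i + 1) ∣ u) (hv : 1 ≤ j → a ^ (j + 1) ∣ v) :
    a ^ (n + 1) ∣ u * v := by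
  rcases Nat.eq_zero_or_pos i with rfl | hi
  · rw [← hij, zero_add]
    exact (hv (by omega)).mul_left u
  rcases Nat.eq_zero_or_pos j with rfl | hj
  · rw [← hij]
    exact (hu hi).mul_right v
  calc a ^ (n + 1) ∣ a ^ (i + 1) * a ^ (j + 1) := by rw [← pow_add]; exact pow_dvd_pow a (by omega)
    _ ∣ u * v := mul_dvd_mul (hu hi) (hv hj)

theorem pow_succ_dvd_fwdDiff_iter_mul {f g : M → R}
    (hf : ∀ n ≥ 1, ∀ x, a ^ (n + 1) ∣ Δ_[h] ^[n] f x)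
    (hg : ∀ n ≥ 1, ∀ x, a ^ (n + 1) ∣ Δ_[h] ^[n] g x) :
    ∀ n ≥ 1, ∀ x, a ^ (n + 1) ∣ Δ_[h] ^[n] (f * g) x := by
  intro n hn x
  rw [fwdDiff_iter_mul]
  refine dvd_sum fun ij hij ↦ (pow_succ_dvd_mul_of_add_eq hn (mem_antidiagonal.1 hij)
    (hf ij.1 · x) (hg ij.2 · _)).mul_left _

end Divisibility

theorem Δ_eq_fwdDiff : Δ = Δ_[1] := rfl

/-- The class `F` is closed under pointwise products. -/
theorem mul_mem_F (f g : ℕ → ℤ)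
    (hfodd : ∀ x, Odd (f x))
    (hfdvd : ∀ n ≥ 1, ∀ x, (2 : ℤ) ^ (n + 1) ∣ Δ^[n] f x)
    (hgodd : ∀ x, Odd (g x))
    (hgdvd : ∀ n ≥ 1, ∀ x, (2 : ℤ) ^ (n + 1) ∣ Δ^[n] g x) :
    (∀ x, Odd ((f * g) x)) ∧
      ∀ n ≥ 1, ∀ x, (2 : ℤ) ^ (n + 1) ∣ Δ^[n] (f * g) x := by
  rw [Δ_eq_fwdDiff] at hfdvd hgdvd ⊢
  exact ⟨fun x ↦ (hfodd x).mul (hgodd x), pow_succ_dvd_fwdDiff_iter_mul hfdvd hgdvd⟩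
end

section
/- If a function b : ℕ → ℤ has all values odd and satisfies 2^{n+1} | (Δⁿb)(x) for all n ≥ 1 and x ∈ ℕ, then the weighted Catalan number C_n^b is odd if and only if n = 2^k - 1 for some k ≥ 0. -/
/-- Heights of the up-steps of a path, starting at height `h`. -/
def upHeights : List Bool → ℕ → List ℕ
  | [], _ => []
  | true :: t, h => h :: upHeights t (h + 1)
  | false :: t, h => upHeights t (h - 1)

/-- A list of steps (`true` = up, `false` = down) is a Dyck path. -/
def IsDyck (l : List Bool) : Prop :=
  l.count true = l.count false ∧ ∀ p ∈ l.inits, p.count false ≤ p.count true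

instance : DecidablePred IsDyck := fun l => by unfold IsDyck; infer_instance

/-- The weighted Catalan number `C_n^b`. -/
def wcat (b : ℕ → ℤ) (n : ℕ) : ℤ :=
  ∑ f : Fin (2 * n) → Bool,
    if IsDyck (List.ofFn f) then ((upHeights (List.ofFn f) 0).map b).prod else 0

/-!
Modulo 2 every weight `b (h_i)` is `1`, so `C_n^b ≡ C_n`, the number of Dyck paths of
semilength `n`. In characteristic 2 the terms `C_i C_j` and `C_j C_i` of Segner's recurrence
`C_{n+1} = ∑_{i+j=n} C_i C_j` cancel, leaving only the diagonal: `C_{2m+1} ≡ C_m` and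
`C_{2m+2} ≡ 0`. Hence `C_n` is odd exactly when `n + 1` is a power of two.
-/

open Finset DyckStep

theorem sum_antidiagonal_mul_eq_sum_diag {R : Type*} [CommRing R] [CharP R 2]
    (g : ℕ → R) (n : ℕ) :
    ∑ ij ∈ antidiagonal n, g ij.1 * g ij.2 =
      ∑ ij ∈ antidiagonal n with ij.1 = ij.2, g ij.1 * g ij.2 := by
  rw [← sum_filter_add_sum_filter_not _ (fun ij : ℕ × ℕ => ij.1 = ij.2), add_eq_left]
  refine sum_involution (fun ij _ => ij.swap) (fun ij _ => ?_) (fun ij hij _ => ?_)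
    (fun ij hij => ?_) (fun ij _ => rfl)
  · rw [Prod.fst_swap, Prod.snd_swap, mul_comm]
    exact CharTwo.add_self_eq_zero _
  · simp only [mem_filter] at hij
    exact fun h => hij.2 (congrArg Prod.snd h)
  · simp only [mem_filter, HasAntidiagonal.mem_antidiagonal, Prod.fst_swap, Prod.snd_swap]
      at hij ⊢
    omega

theorem odd_catalan_succ_iff (n : ℕ) :
    Odd (catalan (n + 1)) ↔ Even n ∧ Odd (catalan (n / 2)) := by
  rw [← ZMod.natCast_eq_one_iff_odd, catalan_succ', Nat.cast_sum]
  simp only [Nat.cast_mul]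
  rw [sum_antidiagonal_mul_eq_sum_diag (fun i => (catalan i : ZMod 2))]
  obtain ⟨m, rfl | rfl⟩ := n.even_or_odd'
  · have hdiag : {ij ∈ antidiagonal (2 * m) | ij.1 = ij.2} = {(m, m)} := by
      ext ⟨i, j⟩
      simp only [mem_filter, HasAntidiagonal.mem_antidiagonal, mem_singleton, Prod.mk.injEq]
      omega
    rw [hdiag, sum_singleton, ← sq, ZMod.pow_card, ZMod.natCast_eq_one_iff_odd]
    simp
  · have hdiag : {ij ∈ antidiagonal (2 * m + 1) | ij.1 = ij.2} = ∅ := by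
      ext ⟨i, j⟩
      simp only [mem_filter, HasAntidiagonal.mem_antidiagonal, Finset.notMem_empty, iff_false]
      omega
    simp [hdiag]

theorem exists_succ_eq_two_pow_sub_one_iff (n : ℕ) :
    (∃ k, n + 1 = 2 ^ k - 1) ↔ Even n ∧ ∃ k, n / 2 = 2 ^ k - 1 := by
  constructor
  · rintro ⟨_ | k, hk⟩
    · simp at hk
    · have := Nat.one_le_two_pow (n := k)
      rw [pow_succ] at hk
      exact ⟨⟨2 ^ k - 1, by omega⟩, k, by omega⟩
  · rintro ⟨⟨m, rfl⟩, k, hk⟩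
    have := Nat.one_le_two_pow (n := k)
    exact ⟨k + 1, by rw [pow_succ]; omega⟩

theorem odd_catalan_iff (n : ℕ) : Odd (catalan n) ↔ ∃ k, n = 2 ^ k - 1 := by
  induction n using Nat.strong_induction_on with
  | _ n ih =>
    cases n with
    | zero => simpa using ⟨0, rfl⟩
    | succ n =>
      rw [odd_catalan_succ_iff, ih (n / 2) (by omega), exists_succ_eq_two_pow_sub_one_iff]

def boolEquivDyckStep : Bool ≃ DyckStep where
  toFun b := bif b then U else D
  invFun | U => true | D => false
  left_inv b := by cases b <;> rfl
  right_inv s := by cases s <;> rfl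

theorem count_map_boolEquivDyckStep (l : List Bool) (c : Bool) :
    (l.map boolEquivDyckStep).count (boolEquivDyckStep c) = l.count c :=
  List.count_map_of_injective l boolEquivDyckStep boolEquivDyckStep.injective c

theorem isDyck_iff (l : List Bool) :
    IsDyck l ↔ (l.map boolEquivDyckStep).count U = (l.map boolEquivDyckStep).count D ∧
      ∀ i, ((l.map boolEquivDyckStep).take i).count D ≤
        ((l.map boolEquivDyckStep).take i).count U := by
  have hU : U = boolEquivDyckStep true := rfl
  have hD : D = boolEquivDyckStep false := rfl
  simp only [← List.map_take, hU, hD, count_map_boolEquivDyckStep, IsDyck, List.mem_inits]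
  refine and_congr_right fun _ => ⟨fun h i => h _ (List.take_prefix i l), fun h p hp => ?_⟩
  rw [List.prefix_iff_eq_take.1 hp]
  exact h _

def isDyckEquivDyckWord : {l : List Bool // IsDyck l} ≃ DyckWord where
  toFun l := ⟨l.1.map boolEquivDyckStep, ((isDyck_iff _).1 l.2).1, ((isDyck_iff _).1 l.2).2⟩
  invFun p := ⟨p.toList.map boolEquivDyckStep.symm, (isDyck_iff _).2 (by
    simpa [List.map_map] using ⟨p.count_U_eq_count_D, p.count_D_le_count_U⟩)⟩
  left_inv l := by simp [List.map_map]
  right_inv p := by ext1; simp [List.map_map]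

theorem semilength_isDyckEquivDyckWord (l : {l : List Bool // IsDyck l}) :
    (isDyckEquivDyckWord l).semilength = l.1.count true :=
  count_map_boolEquivDyckStep l.1 true

theorem length_eq_two_mul_count_true {l : List Bool} (h : IsDyck l) :
    l.length = 2 * l.count true := by
  have := List.count_true_add_count_false l
  have := h.1
  omega

theorem card_isDyck_ofFn (n : ℕ) :
    Fintype.card {f : Fin (2 * n) → Bool // IsDyck (List.ofFn f)} = catalan n := by
  rw [← DyckWord.card_dyckWord_semilength_eq_catalan]
  refine Fintype.card_congr <|
    ((Equiv.vectorEquivFin Bool (2 * n)).symm.subtypeEquiv fun f => ?_).trans <|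
    (Equiv.subtypeSubtypeEquivSubtypeInter _ _).trans <|
    (Equiv.subtypeEquivRight fun l => and_comm).trans <|
    (Equiv.subtypeSubtypeEquivSubtypeInter _ _).symm.trans <|
    isDyckEquivDyckWord.subtypeEquiv fun l => ?_
  · exact iff_of_eq (congrArg IsDyck (List.Vector.toList_ofFn f).symm)
  · rw [semilength_isDyckEquivDyckWord, length_eq_two_mul_count_true l.2]
    omega

theorem wcat_cast_zmod_two {b : ℕ → ℤ} (hodd : ∀ x, Odd (b x)) (n : ℕ) :
    ((wcat b n : ℤ) : ZMod 2) = catalan n := by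
  have hprod (l : List ℕ) : (((l.map b).prod : ℤ) : ZMod 2) = 1 := by
    rw [Int.cast_list_prod, List.map_map]
    exact List.prod_eq_one fun x hx => by
      obtain ⟨y, -, rfl⟩ := List.mem_map.1 hx
      exact ZMod.intCast_eq_one_iff_odd.2 (hodd y)
  simp only [wcat, Int.cast_sum, apply_ite (Int.cast : ℤ → ZMod 2), hprod, Int.cast_zero]
  rw [sum_boole, ← Fintype.card_subtype, card_isDyck_ofFn]

theorem wcat_odd_iff_general (b : ℕ → ℤ)
    (hodd : ∀ x, Odd (b x)) (n : ℕ) :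
    Odd (wcat b n) ↔ ∃ k : ℕ, n = 2 ^ k - 1 := by
  rw [← ZMod.intCast_eq_one_iff_odd, wcat_cast_zmod_two hodd, ZMod.natCast_eq_one_iff_odd,
    odd_catalan_iff]

/-- If all values of `b` are odd and `2^(n+1) ∣ Δⁿ b x` for `n ≥ 1`, then
`C_n^b` is odd iff `n = 2^k - 1` for some `k`. -/
theorem wcat_odd_iff (b : ℕ → ℤ)
    (hodd : ∀ x, Odd (b x))
    (hdvd : ∀ n ≥ 1, ∀ x, (2 : ℤ) ^ (n + 1) ∣ Δ^[n] b x) (n : ℕ) :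
    Odd (wcat b n) ↔ ∃ k : ℕ, n = 2 ^ k - 1 :=
  wcat_odd_iff_general b hodd n
end
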